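/- Let η_i, η_j be iid with everywhere positive density and let ξ_i, ξ_j be iid random variables independent of (η_i, η_j). For deterministic reals v_i > v_j, define r_i = v_i + ξ_i + η_i and r_j = v_j + ξ_j + η_j. Then P(r_i > r_j) > P(r_j > r_i). -/

import Mathlib

/-!
With `X = ηᵢ + ξᵢ`, `Y = ηⱼ + ξⱼ` and `d = vᵢ - vⱼ > 0`, the pairs `(ηᵢ, ηⱼ)` and `(ξᵢ, ξⱼ)` are
exchangeable and independent, hence so is `(X, Y)`. Therefore `P(X - Y < -d) = P(X - Y > d)`, and
the claim `P(X - Y > d) < P(X - Y > -d)` follows because the event `|X - Y| < d` has positive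
probability: if the ball `B` of radius `d / 4` carries positive mass for the law of `ηᵢ`, then
`ηᵢ, ηⱼ ∈ B` has positive probability, likewise for `ξ`, and these two events are independent.
-/

open MeasureTheory ProbabilityTheory Metric

namespace ProbabilityTheory

variable {Ω Ω' α β : Type*} {mΩ : MeasurableSpace Ω} {mΩ' : MeasurableSpace Ω'}
  [MeasurableSpace α] [MeasurableSpace β] {μ : Measure Ω} {μ' : Measure Ω'}

lemma IdentDistrib.prodMk_of_indepFun [IsFiniteMeasure μ] [IsFiniteMeasure μ']
    {X : Ω → α} {Y : Ω → β} {X' : Ω' → α} {Y' : Ω' → β}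
    (hX : IdentDistrib X X' μ μ') (hY : IdentDistrib Y Y' μ μ')
    (h : IndepFun X Y μ) (h' : IndepFun X' Y' μ') :
    IdentDistrib (fun ω ↦ (X ω, Y ω)) (fun ω ↦ (X' ω, Y' ω)) μ μ' where
  aemeasurable_fst := hX.aemeasurable_fst.prodMk hY.aemeasurable_fst
  aemeasurable_snd := hX.aemeasurable_snd.prodMk hY.aemeasurable_snd
  map_eq := by
    rw [h.map_prod_eq_prod_map_map hX.aemeasurable_fst hY.aemeasurable_fst,
      h'.map_prod_eq_prod_map_map hX.aemeasurable_snd hY.aemeasurable_snd, hX.map_eq, hY.map_eq]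

lemma IndepFun.identDistrib_prodMk_swap [IsFiniteMeasure μ] {X Y : Ω → α}
    (h : IndepFun X Y μ) (hXY : IdentDistrib X Y μ μ) :
    IdentDistrib (fun ω ↦ (X ω, Y ω)) (fun ω ↦ (Y ω, X ω)) μ μ :=
  hXY.prodMk_of_indepFun hXY.symm h h.symm

lemma IndepFun.measure_dist_lt_pos [IsProbabilityMeasure μ] [PseudoMetricSpace α]
    [HereditarilyLindelofSpace α] [OpensMeasurableSpace α] {X Y : Ω → α}
    (h : IndepFun X Y μ) (hXY : IdentDistrib X Y μ μ) {r : ℝ} (hr : 0 < r) :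
    0 < μ {ω | dist (X ω) (Y ω) < r} := by
  have : IsProbabilityMeasure (μ.map X) := Measure.isProbabilityMeasure_map hXY.aemeasurable_fst
  obtain ⟨x, hx⟩ := (μ.map X).nonempty_support (NeZero.ne _)
  set B := ball x (r / 2)
  have hB : 0 < μ.map X B :=
    (Measure.mem_support_iff_forall x).1 hx B (ball_mem_nhds x (half_pos hr))
  rw [Measure.map_apply_of_aemeasurable hXY.aemeasurable_fst measurableSet_ball] at hB
  have hsub : X ⁻¹' B ∩ Y ⁻¹' B ⊆ {ω | dist (X ω) (Y ω) < r} := fun ω ⟨hXω, hYω⟩ ↦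
    calc dist (X ω) (Y ω) ≤ dist (X ω) x + dist (Y ω) x := dist_triangle_right _ _ _
      _ < r / 2 + r / 2 := add_lt_add hXω hYω
      _ = r := add_halves r
  refine lt_of_lt_of_le ?_ (measure_mono hsub)
  rw [h.measure_inter_preimage_eq_mul _ _ measurableSet_ball measurableSet_ball,
    ← hXY.measure_mem_eq measurableSet_ball]
  exact ENNReal.mul_pos hB.ne' hB.ne'

lemma IndepFun.measure_abs_add_sub_add_lt_pos [IsProbabilityMeasure μ] {A B C D : Ω → ℝ}
    (h : IndepFun (fun ω ↦ (A ω, B ω)) (fun ω ↦ (C ω, D ω)) μ)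
    (hAB : IndepFun A B μ) (hA : IdentDistrib A B μ μ)
    (hCD : IndepFun C D μ) (hC : IdentDistrib C D μ μ) {r : ℝ} (hr : 0 < r) :
    0 < μ {ω | |A ω + C ω - (B ω + D ω)| < r} := by
  have hS : MeasurableSet {p : ℝ × ℝ | dist p.1 p.2 < r / 2} :=
    measurableSet_lt (by fun_prop) measurable_const
  have hsub : {ω | dist (A ω) (B ω) < r / 2} ∩ {ω | dist (C ω) (D ω) < r / 2}
      ⊆ {ω | |A ω + C ω - (B ω + D ω)| < r} := by
    rintro ω ⟨h1, h2⟩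
    simp only [Set.mem_ofPred_eq, Real.dist_eq, abs_lt] at h1 h2 ⊢
    constructor <;> linarith
  refine (lt_of_lt_of_eq ?_ (h.measure_inter_preimage_eq_mul _ _ hS hS).symm).trans_le
    (measure_mono hsub)
  exact ENNReal.mul_pos (hAB.measure_dist_lt_pos hA (half_pos hr)).ne'
    (hCD.measure_dist_lt_pos hC (half_pos hr)).ne'

lemma measure_sub_lt_neg_lt_measure_neg_lt_sub [IsFiniteMeasure μ] {X Y : Ω → ℝ}
    (hXY : IdentDistrib (fun ω ↦ (X ω, Y ω)) (fun ω ↦ (Y ω, X ω)) μ μ) {d : ℝ} (hd : 0 < d)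
    (hpos : 0 < μ {ω | |X ω - Y ω| < d}) :
    μ {ω | X ω - Y ω < -d} < μ {ω | -d < X ω - Y ω} := by
  have hswap : μ {ω | X ω - Y ω < -d} = μ {ω | d < X ω - Y ω} := by
    have hS : MeasurableSet {p : ℝ × ℝ | p.1 - p.2 < -d} :=
      measurableSet_lt (by fun_prop) measurable_const
    refine (hXY.measure_mem_eq hS).trans (congrArg μ ?_)
    ext ω
    simp only [Set.mem_preimage, Set.mem_ofPred_eq]
    constructor <;> intro <;> linarith
  have hnull : NullMeasurableSet {ω | |X ω - Y ω| < d} μ :=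
    hXY.aemeasurable_fst.nullMeasurable
      (measurableSet_lt (by fun_prop) measurable_const :
        MeasurableSet {p : ℝ × ℝ | |p.1 - p.2| < d})
  have hdisj : Disjoint {ω | d < X ω - Y ω} {ω | |X ω - Y ω| < d} :=
    Set.disjoint_left.2 fun ω h1 h2 ↦ by
      simp only [Set.mem_ofPred_eq] at h1 h2; linarith [le_abs_self (X ω - Y ω)]
  have hsub : {ω | d < X ω - Y ω} ∪ {ω | |X ω - Y ω| < d} ⊆ {ω | -d < X ω - Y ω} := by
    rintro ω (h | h) <;> simp only [Set.mem_ofPred_eq] at h ⊢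
    · linarith
    · linarith [neg_abs_le (X ω - Y ω)]
  calc μ {ω | X ω - Y ω < -d} = μ {ω | d < X ω - Y ω} := hswap
    _ < μ {ω | d < X ω - Y ω} + μ {ω | |X ω - Y ω| < d} :=
      ENNReal.lt_add_right (measure_ne_top _ _) hpos.ne'
    _ = μ ({ω | d < X ω - Y ω} ∪ {ω | |X ω - Y ω| < d}) :=
      (measure_union₀ hnull hdisj.aedisjoint).symm
    _ ≤ μ {ω | -d < X ω - Y ω} := measure_mono hsub

end ProbabilityTheory

theorem stmt_17_general {Ω : Type*} [MeasureSpace Ω] [IsProbabilityMeasure (ℙ : Measure Ω)]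
    (ηi ηj ξi ξj : Ω → ℝ) (f : ℝ → ℝ)
    (hmi : Measurable ηi) (hmj : Measurable ηj)
    (hmxi : Measurable ξi) (hmxj : Measurable ξj)
    (hη_indep : ProbabilityTheory.IndepFun ηi ηj ℙ)
    (hdi : Measure.map ηi ℙ = volume.withDensity (fun x => ENNReal.ofReal (f x)))
    (hdj : Measure.map ηj ℙ = volume.withDensity (fun x => ENNReal.ofReal (f x)))
    (hξ_indep : ProbabilityTheory.IndepFun ξi ξj ℙ)
    (hξ_ident : Measure.map ξi ℙ = Measure.map ξj ℙ)
    (h_indep : ProbabilityTheory.IndepFun (fun ω => (ηi ω, ηj ω)) (fun ω => (ξi ω, ξj ω)) ℙ)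
    (vi vj : ℝ) (hv : vj < vi) :
    ℙ {ω | vj + ξj ω + ηj ω < vi + ξi ω + ηi ω}
      > ℙ {ω | vi + ξi ω + ηi ω < vj + ξj ω + ηj ω} := by
  have hd : 0 < vi - vj := sub_pos.mpr hv
  have hη : IdentDistrib ηi ηj ℙ ℙ := ⟨hmi.aemeasurable, hmj.aemeasurable, hdi.trans hdj.symm⟩
  have hξ : IdentDistrib ξi ξj ℙ ℙ := ⟨hmxi.aemeasurable, hmxj.aemeasurable, hξ_ident⟩
  have hexch : IdentDistrib (fun ω ↦ (ηi ω + ξi ω, ηj ω + ξj ω))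
      (fun ω ↦ (ηj ω + ξj ω, ηi ω + ξi ω)) ℙ ℙ :=
    ((hη_indep.identDistrib_prodMk_swap hη).prodMk_of_indepFun
      (hξ_indep.identDistrib_prodMk_swap hξ) h_indep
      (h_indep.comp measurable_swap measurable_swap)).comp
      (u := fun p : (ℝ × ℝ) × (ℝ × ℝ) ↦ (p.1.1 + p.2.1, p.1.2 + p.2.2)) (by fun_prop)
  have hpos : 0 < ℙ {ω | |ηi ω + ξi ω - (ηj ω + ξj ω)| < vi - vj} :=
    h_indep.measure_abs_add_sub_add_lt_pos hη_indep hη hξ_indep hξ hd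
  convert measure_sub_lt_neg_lt_measure_neg_lt_sub hexch hd hpos using 2 <;> ext ω <;>
    simp only [Set.mem_ofPred_eq] <;> constructor <;> intro <;> linarith

theorem stmt_17 {Ω : Type*} [MeasureSpace Ω] [IsProbabilityMeasure (ℙ : Measure Ω)]
    (ηi ηj ξi ξj : Ω → ℝ) (f : ℝ → ℝ) (hf_pos : ∀ x, 0 < f x)
    (hmi : Measurable ηi) (hmj : Measurable ηj)
    (hmxi : Measurable ξi) (hmxj : Measurable ξj)
    (hη_indep : ProbabilityTheory.IndepFun ηi ηj ℙ)
    (hdi : Measure.map ηi ℙ = volume.withDensity (fun x => ENNReal.ofReal (f x)))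
    (hdj : Measure.map ηj ℙ = volume.withDensity (fun x => ENNReal.ofReal (f x)))
    (hξ_indep : ProbabilityTheory.IndepFun ξi ξj ℙ)
    (hξ_ident : Measure.map ξi ℙ = Measure.map ξj ℙ)
    (h_indep : ProbabilityTheory.IndepFun (fun ω => (ηi ω, ηj ω)) (fun ω => (ξi ω, ξj ω)) ℙ)
    (vi vj : ℝ) (hv : vj < vi) :
    ℙ {ω | vj + ξj ω + ηj ω < vi + ξi ω + ηi ω}
      > ℙ {ω | vi + ξi ω + ηi ω < vj + ξj ω + ηj ω} :=
  stmt_17_general ηi ηj ξi ξj f hmi hmj hmxi hmxj hη_indep hdi hdj hξ_indep hξ_ident h_indep vi vj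
    hv
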